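/- The algebra P_n satisfies the identity (ab)(cd) = 0 for all a,b,c,d in P_n. -/

import Mathlib

inductive PBasis (n : ℕ) : Type
  | a : Fin n → Fin n → PBasis n
  | b : Fin n → Fin n → PBasis n
  | c : Fin n → PBasis n
  | d : Fin n → Fin n → PBasis n
  | e : Fin n → Fin n → PBasis n
  deriving DecidableEq

abbrev Pn (F : Type*) [Field F] (n : ℕ) : Type _ := PBasis n →₀ F

open PBasis in
noncomputable def mulB (F : Type*) [Field F] {n : ℕ} : PBasis n → PBasis n → Pn F n
  | a i j, c k => if k = i then Finsupp.single (d i j) 1 else 0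
  | b i j, c k => if k = i then Finsupp.single (e i j) 1 else 0
  | a i j, e k l => if i = k ∧ j = l then Finsupp.single (c j) 1 else 0
  | e k l, a i j => if i = k ∧ j = l then Finsupp.single (c j) 1 else 0
  | b i j, d k l => if i = k ∧ j = l then -Finsupp.single (c j) 1 else 0
  | d k l, b i j => if i = k ∧ j = l then -Finsupp.single (c j) 1 else 0
  | _, _ => 0

noncomputable def mulLin (F : Type*) [Field F] {n : ℕ} :
    Pn F n →ₗ[F] Pn F n →ₗ[F] Pn F n :=
  Finsupp.lift (Pn F n →ₗ[F] Pn F n) F (PBasis n)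
    (fun u => Finsupp.lift (Pn F n) F (PBasis n) (fun v => mulB F u v))

noncomputable instance (F : Type*) [Field F] (n : ℕ) : Mul (Pn F n) :=
  ⟨fun x y => mulLin F x y⟩

/-!
The square of `P_n` lies in the span `D_n` of the basis vectors `c i`, `d i j`, `e i j`, and
`D_n · D_n = 0`. Both facts reduce, by bilinearity, to a check on pairs of basis vectors.
-/

namespace PBasis

def IsD {n : ℕ} : PBasis n → Prop
  | a _ _ => False
  | b _ _ => False
  | _ => True

end PBasis

def Dn (F : Type*) [Field F] (n : ℕ) : Submodule F (Pn F n) :=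
  Finsupp.supported F F {t | t.IsD}

section

variable {F : Type*} [Field F] {n : ℕ}

lemma mulLin_single_single (u v : PBasis n) :
    mulLin F (Finsupp.single u 1) (Finsupp.single v 1) = mulB F u v := by
  simp [mulLin]

lemma map₂_mulLin_supported (s t : Set (PBasis n)) :
    Submodule.map₂ (mulLin F) (Finsupp.supported F F s) (Finsupp.supported F F t) =
      Submodule.span F (Set.image2 (mulB F) s t) := by
  simp only [Finsupp.supported_eq_span_single, Submodule.map₂_span_span, Set.image2_image_left,
    Set.image2_image_right, mulLin_single_single]

lemma mulB_mem_Dn (u v : PBasis n) : mulB F u v ∈ Dn F n := by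
  have single_mem {t : PBasis n} (ht : t.IsD) : Finsupp.single t (1 : F) ∈ Dn F n :=
    Finsupp.single_mem_supported F 1 ht
  cases u <;> cases v <;> simp only [mulB] <;> (try split_ifs) <;>
    first
      | exact Submodule.zero_mem _
      | exact single_mem trivial
      | exact Submodule.neg_mem _ (single_mem trivial)

lemma mulB_eq_zero_of_isD {u v : PBasis n} (hu : u.IsD) (hv : v.IsD) : mulB F u v = 0 := by
  cases u <;> cases v <;> first | rfl | exact hu.elim | exact hv.elim

lemma mul_mem_Dn (x y : Pn F n) : x * y ∈ Dn F n := by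
  have hxy : x * y ∈ Submodule.map₂ (mulLin F) ⊤ ⊤ :=
    Submodule.apply_mem_map₂ _ Submodule.mem_top Submodule.mem_top
  rw [← Finsupp.supported_univ, map₂_mulLin_supported] at hxy
  refine Submodule.span_le.mpr ?_ hxy
  rintro _ ⟨u, -, v, -, rfl⟩
  exact mulB_mem_Dn u v

lemma mul_eq_zero_of_mem_Dn {p q : Pn F n} (hp : p ∈ Dn F n) (hq : q ∈ Dn F n) : p * q = 0 := by
  have hpq : p * q ∈ Submodule.map₂ (mulLin F) (Dn F n) (Dn F n) :=
    Submodule.apply_mem_map₂ _ hp hq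
  rw [Dn, map₂_mulLin_supported, Submodule.span_eq_bot.mpr] at hpq
  · exact hpq
  · rintro _ ⟨u, hu, v, hv, rfl⟩
    exact mulB_eq_zero_of_isD hu hv

end

theorem stmt (F : Type*) [Field F] (n : ℕ) :
    ∀ x y z w : Pn F n, (x * y) * (z * w) = 0 := by
  intro x y z w
  exact mul_eq_zero_of_mem_Dn (mul_mem_Dn x y) (mul_mem_Dn z w)
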